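/- Let T̃ = Φ(Ẽ) be the shift-closure of the subdivided 1-3 tree. Then Ibr(T̃) = 0: for every λ > 0 and ε > 0 there is a cutset π of T̃ separating the root from infinity with Σ_{e∈π} exp(−|e|^λ) ≤ ε. -/

import Mathlib

open Filter ENNReal

namespace TreeNotions

variable {α : Type}

/-- Vertices (equivalently, edges indexed by their upper endpoint) at level `n`. -/
def level (T : Set (List α)) (n : ℕ) : Set (List α) := {v ∈ T | v.length = n}

/-- The ball of radius `n` around the root. -/
def ball (T : Set (List α)) (n : ℕ) : Set (List α) := {v ∈ T | v.length ≤ n}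

/-- An infinite simple path from the root. -/
def IsRay (T : Set (List α)) (r : ℕ → List α) : Prop :=
  r 0 = [] ∧ ∀ n, r n ∈ T ∧ ∃ a, r (n + 1) = r n ++ [a]

/-- A cutset separating the root from infinity: a set of edges (identified with their
upper endpoints) meeting every infinite simple path from the root. -/
def IsCutset (T : Set (List α)) (π : Set (List α)) : Prop :=
  (∀ v ∈ π, v ∈ T ∧ v ≠ []) ∧ ∀ r, IsRay T r → ∃ n, r n ∈ π

/-- An infinite, locally finite, rooted (prefix-closed) tree of words. -/
def IsTree (T : Set (List α)) : Prop :=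
  [] ∈ T ∧ (∀ v ∈ T, v.dropLast ∈ T) ∧ (∀ v ∈ T, {a : α | v ++ [a] ∈ T}.Finite) ∧ T.Infinite

/-- The branching number. -/
noncomputable def br (T : Set (List α)) : ℝ≥0∞ :=
  sSup {lam : ℝ≥0∞ | 0 < lam ∧
    0 < ⨅ (π) (_ : IsCutset T π), ∑' e : π, lam⁻¹ ^ (e : List α).length}

/-- The lower exponential growth rate. -/
noncomputable def gr (T : Set (List α)) : ℝ≥0∞ :=
  Filter.liminf (fun n => (Nat.card (level T n) : ℝ≥0∞) ^ ((n : ℝ)⁻¹)) atTop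

/-- The intermediate branching number (with `sSup ∅ = 0`). -/
noncomputable def Ibr (T : Set (List α)) : ℝ :=
  sSup {lam : ℝ | 0 < lam ∧
    0 < ⨅ (π) (_ : IsCutset T π),
      ∑' e : π, ENNReal.ofReal (Real.exp (-((e : List α).length : ℝ) ^ lam))}

/-- The intermediate growth rate (with `sSup ∅ = 0`). -/
noncomputable def Igr (T : Set (List α)) : ℝ :=
  sSup {lam : ℝ | 0 < lam ∧
    0 < Filter.liminf
      (fun n => ∑' _e : level T n, ENNReal.ofReal (Real.exp (-(n : ℝ) ^ lam))) atTop}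

/-- The branching-ruin number (with `sSup ∅ = 0`). -/
noncomputable def brr (T : Set (List α)) : ℝ :=
  sSup {lam : ℝ | 0 < lam ∧
    0 < ⨅ (π) (_ : IsCutset T π),
      ∑' e : π, ENNReal.ofReal (((e : List α).length : ℝ) ^ (-lam))}

/-- The polynomial growth rate (with `sSup ∅ = 0`). -/
noncomputable def grr (T : Set (List α)) : ℝ :=
  sSup {lam : ℝ | 0 < lam ∧
    0 < Filter.liminf
      (fun n => ∑' _e : level T n, ENNReal.ofReal ((n : ℝ) ^ (-lam))) atTop}

/-- The descendant subtree of a vertex `w`. -/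
def desc (T : Set (List α)) (w : List α) : Set (List α) := {v ∈ T | w <+: v}

/-- Adjacency in a tree of words. -/
def Adj (u v : List α) : Prop := (∃ a, v = u ++ [a]) ∨ ∃ a, u = v ++ [a]

/-- A tree of words is subperiodic if for some `N ≥ 0`, every vertex `x` admits an
adjacency-preserving injection from `T^x` to `T^{f(x)}` with `|f(x)| ≤ N`. -/
def IsSubperiodic (T : Set (List α)) : Prop :=
  ∃ N : ℕ, ∀ w ∈ T, ∃ f : List α → List α,
    f w ∈ T ∧ (f w).length ≤ N ∧ Set.InjOn f (desc T w) ∧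
    Set.MapsTo f (desc T w) (desc T (f w)) ∧
    ∀ u ∈ desc T w, ∀ v ∈ desc T w, Adj u v → Adj (f u) (f v)

/-- Number of children of the `i`-th vertex (from the left) at level `n` of the 1-3 tree. -/
def childCount (n i : ℕ) : ℕ := if n = 0 then 2 else if i < 2 ^ (n - 1) then 1 else 3

/-- The ordered list of (labelled) vertices at level `n` of the 1-3 tree. -/
def T13Level : ℕ → List (List ℕ)
  | 0 => [[]]
  | n + 1 => (T13Level n).zipIdx.flatMap fun p => (List.range (childCount n p.2)).map fun j => p.1 ++ [j]

/-- The 1-3 tree, as a set of labelled words. -/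
def T13 : Set (List ℕ) := {w | ∃ n, w ∈ T13Level n}

/-- Replace the letter at level `k + 1` by that letter followed by `k` zeros:
the edge at level `k + 1` is subdivided into a path of `k + 1` edges. -/
def expandFrom : ℕ → List ℕ → List ℕ
  | _, [] => []
  | k, a :: rest => (a :: List.replicate k 0) ++ expandFrom (k + 1) rest

/-- The subdivided 1-3 tree `T₀`: each level-`n` edge of the 1-3 tree becomes a path of
`n` edges. -/
def T0 : Set (List ℕ) := {u | ∃ w ∈ T13, u <+: expandFrom 0 w}

/-- The prefix of length `n` of a sequence. -/
def pref (x : ℕ → ℕ) (n : ℕ) : List ℕ := (List.range n).map x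

/-- The set of sequences coded by `T₀` (its rays). -/
def E0 : Set (ℕ → ℕ) := {x | ∀ n, pref x n ∈ T0}

/-- The left shift map. -/
def shift (x : ℕ → ℕ) : ℕ → ℕ := fun n => x (n + 1)

/-- The shift closure of `E₀`. -/
def Etilde : Set (ℕ → ℕ) := ⋃ j : ℕ, shift^[j] '' E0

/-- The prefix tree `Φ(E)` of a set of sequences. -/
def treeOf (E : Set (ℕ → ℕ)) : Set (List ℕ) := {w | ∃ x ∈ E, ∃ n, w = pref x n}

/-- The tree `T̃ = Φ(Ẽ)`. -/
def Ttilde : Set (List ℕ) := treeOf Etilde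

end TreeNotions

namespace IbrAux
open TreeNotions

def tri : ℕ → ℕ
  | 0 => 0
  | k + 1 => tri k + k + 1

theorem tri_lt_tri_succ (k : ℕ) : tri k < tri (k+1) := by simp only [tri]; omega

theorem tri_strictMono : StrictMono tri := strictMono_nat_of_lt_succ tri_lt_tri_succ

theorem tri_le_tri {a b : ℕ} (h : a ≤ b) : tri a ≤ tri b := tri_strictMono.monotone h


theorem length_expandFrom (v : List ℕ) : ∀ k, tri k + (expandFrom k v).length = tri (k + v.length) := by
  induction v with
  | nil => intro k; simp [expandFrom]
  | cons a r ih =>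
      intro k
      have h1 := ih (k+1)
      have e1 : tri (k + (r.length + 1)) = tri (k+1+r.length) := by
        congr 1; omega
      have h3 : tri (k+1) = tri k + k + 1 := rfl
      simp only [expandFrom, List.length_append, List.length_cons, List.length_replicate]
      omega

theorem expandFrom_getElem_tri (v : List ℕ) : ∀ k c p (hc : c < v.length) (hp : tri k + p = tri (k + c))
    (h : p < (expandFrom k v).length), (expandFrom k v)[p] = v[c] := by
  induction v with
  | nil => intro k c p hc; simp at hc
  | cons a r ih =>
      intro k c p hc hp h
      simp only [expandFrom, List.cons_append] at h ⊢
      match c with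
      | 0 =>
          have hp0 : p = 0 := by simp at hp; omega
          subst hp0
          simp
      | c' + 1 =>
          have hk1 : tri (k + (c' + 1)) = tri (k+1+c') := by congr 1; omega
          have h2 : tri (k+1) ≤ tri (k+1+c') := tri_le_tri (by omega)
          have h3 : tri (k+1) = tri k + k + 1 := rfl
          have hpge : k + 1 ≤ p := by omega
          match p, hpge with
          | q + 1, _ =>
          have hq : k ≤ q := by omega
          rw [List.getElem_cons_succ]
          rw [List.getElem_append_right (by simp; omega)]
          have hcr : c' < r.length := by simpa using hc
          simp only [List.length_replicate]
          rw [ih (k+1) c' (q - k) hcr (by omega)]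
          simp

theorem expandFrom_getElem_zero (v : List ℕ) : ∀ k p (h : p < (expandFrom k v).length)
    (hz : ∀ c, c < v.length → tri k + p ≠ tri (k + c)), (expandFrom k v)[p] = 0 := by
  induction v with
  | nil => intro k p h; simp [expandFrom] at h
  | cons a r ih =>
      intro k p h hz
      have hp0 : p ≠ 0 := by
        intro h0; exact hz 0 (by simp) (by simp [h0])
      simp only [expandFrom, List.cons_append] at h ⊢
      match p, hp0 with
      | q + 1, _ =>
      rw [List.getElem_cons_succ]
      rcases Nat.lt_or_ge q k with hlt | hge
      · rw [List.getElem_append_left (by simp; omega)]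
        simp
      · rw [List.getElem_append_right (by simp; omega)]
        simp only [List.length_replicate]
        rw [ih (k+1) (q - k) (by simp at h; omega)]
        intro c hc heq
        refine hz (c+1) (by simpa using hc) ?_
        have h3 : tri (k+1) = tri k + k + 1 := rfl
        have hk1 : tri (k + (c + 1)) = tri (k+1+c) := by congr 1; omega
        omega


def start (n i : ℕ) : ℕ := (((List.range i).map (childCount n))).sum
def step (s : ℕ × ℕ) (a : ℕ) : ℕ × ℕ := (s.1 + 1, start s.1 s.2 + a)
def sIdx (st : ℕ × ℕ) (w : List ℕ) : ℕ × ℕ := w.foldl step st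
def Valid : ℕ × ℕ → List ℕ → Prop
  | _, [] => True
  | st, a :: rest => a < childCount st.1 st.2 ∧ Valid (step st a) rest
theorem childCount_le (n i : ℕ) : childCount n i ≤ 3 := by
  unfold childCount; split <;> [omega; split <;> omega]
theorem childCount_pos (n i : ℕ) : 0 < childCount n i := by
  unfold childCount; split <;> [omega; split <;> omega]
theorem start_succ (n i : ℕ) : start n (i+1) = start n i + childCount n i := by
  simp [start, List.range_succ]
theorem sIdx_fst (st : ℕ × ℕ) (w : List ℕ) : (sIdx st w).fst = st.1 + w.length := by
  induction w generalizing st with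
  | nil => simp [sIdx]
  | cons a r ih => simp only [sIdx, List.foldl_cons] at *; rw [ih]; simp [step]; omega
theorem sIdx_append (st : ℕ × ℕ) (v w : List ℕ) : sIdx st (v ++ w) = sIdx (sIdx st v) w := by
  simp [sIdx, List.foldl_append]
theorem valid_append_singleton {st : ℕ × ℕ} {v : List ℕ} (hv : Valid st v) {a : ℕ}
    (ha : a < childCount (sIdx st v).1 (sIdx st v).2) : Valid st (v ++ [a]) := by
  induction v generalizing st with
  | nil => exact ⟨ha, trivial⟩
  | cons b r ih =>
      obtain ⟨hb, hr⟩ := hv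
      exact ⟨hb, ih hr (by simpa [sIdx] using ha)⟩

/-- idx of a word from the root -/
def idx2 (w : List ℕ) : ℕ := (sIdx (0,0) w).2

theorem idx2_append_singleton (v : List ℕ) (a : ℕ) :
    idx2 (v ++ [a]) = start v.length (idx2 v) + a := by
  have h1 := sIdx_fst (0,0) v
  simp only at h1
  simp only [idx2, sIdx_append]
  show (step (sIdx (0,0) v) a).2 = _
  simp only [step]
  rw [h1, Nat.zero_add]

theorem zip_map_self {α β : Type} (f : α → β) (l : List α) :
    (l.map f).zip l = l.map fun v => (f v, v) := by
  induction l with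
  | nil => simp
  | cons a r ih => simp [ih]

/-- key consecutive-index lemma -/
theorem map_idx2_flatMap (n : ℕ) (l : List (List ℕ)) (s : ℕ)
    (hlen : ∀ v ∈ l, v.length = n)
    (hidx : l.map idx2 = List.range' s l.length) :
    (l.flatMap fun v => (List.range (childCount n (idx2 v))).map fun a => v ++ [a]).map idx2
      = List.range' (start n s)
          ((l.flatMap fun v => (List.range (childCount n (idx2 v))).map fun a => v ++ [a]).length) := by
  induction l generalizing s with
  | nil => simp
  | cons v l ih =>
      have hvlen : v.length = n := hlen v (by simp)
      have hvidx : idx2 v = s := by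
        simp [List.range'] at hidx; exact hidx.1
      have htail : l.map idx2 = List.range' (s+1) l.length := by
        simp [List.range'] at hidx; exact hidx.2
      simp only [List.flatMap_cons, List.map_append, List.length_append]
      rw [ih (s+1) (fun w hw => hlen w (by simp [hw])) htail]
      have hblock : ((List.range (childCount n (idx2 v))).map fun a => v ++ [a]).map idx2
          = List.range' (start n s) (childCount n s) := by
        rw [List.map_map]
        have : (idx2 ∘ fun a => v ++ [a]) = fun a => start n s + a := by
          funext a
          simp [Function.comp, idx2_append_singleton, hvlen, hvidx]
        rw [this, ← List.range'_eq_map_range, hvidx]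
      rw [hblock]
      have hlens : ((List.range (childCount n (idx2 v))).map fun a => v ++ [a]).length
          = childCount n s := by simp [hvidx]
      rw [hlens]
      have hstart : start n (s+1) = start n s + childCount n s := start_succ n s
      have := List.range'_append (s := start n s) (m := childCount n s)
        (n := (l.flatMap fun v => (List.range (childCount n (idx2 v))).map fun a => v ++ [a]).length) (step := 1)
      simp only [one_mul] at this
      rw [hstart, this]

theorem T13Level_main (n : ℕ) :
    (∀ w ∈ T13Level n, w.length = n ∧ Valid (0,0) w) ∧
      (T13Level n).map idx2 = List.range ((T13Level n).length) := by
  induction n with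
  | zero =>
      refine ⟨?_, ?_⟩
      · intro w hw; simp [T13Level] at hw; subst hw; exact ⟨rfl, trivial⟩
      · simp [T13Level, idx2, sIdx]
  | succ n ih =>
      obtain ⟨ihm, ihidx⟩ := ih
      have hrw : T13Level (n+1)
          = (T13Level n).flatMap fun v => (List.range (childCount n (idx2 v))).map fun a => v ++ [a] := by
        show (T13Level n).zipIdx.flatMap _ = _
        have hz : ∀ l : List (List ℕ), l.zip (l.map idx2) = l.map fun v => (v, idx2 v) := by
          intro l; induction l <;> simp [*]
        rw [List.zipIdx_eq_zip_range', ← List.range_eq_range', ← ihidx, hz, List.flatMap_map]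
      have hlen : ∀ v ∈ T13Level n, v.length = n := fun v hv => (ihm v hv).1
      have hflat := map_idx2_flatMap n (T13Level n) 0 hlen (by rw [ihidx, List.range_eq_range'])
      constructor
      · intro w hw
        rw [hrw] at hw
        simp only [List.mem_flatMap, List.mem_map, List.mem_range] at hw
        obtain ⟨v, hv, a, ha, rfl⟩ := hw
        have hvl := (ihm v hv).1
        refine ⟨by simp [hvl], ?_⟩
        refine valid_append_singleton (ihm v hv).2 ?_
        rw [sIdx_fst]
        simpa [hvl, idx2] using ha
      · rw [hrw, hflat]
        have : start n 0 = 0 := by simp [start]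
        rw [this, List.range_eq_range']

theorem T13_valid {w : List ℕ} (hw : w ∈ T13) : Valid (0,0) w := by
  obtain ⟨n, hn⟩ := hw
  exact ((T13Level_main n).1 w hn).2



theorem start_poor {n i : ℕ} (hn : 1 ≤ n) (hi : i ≤ 2^(n-1)) : start n i = i := by
  induction i with
  | zero => simp [start]
  | succ i ih =>
      rw [start_succ, ih (by omega)]
      have : childCount n i = 1 := by unfold childCount; rw [if_neg (by omega), if_pos (by omega)]
      omega

theorem start_rich {n : ℕ} (hn : 1 ≤ n) (d : ℕ) : start n (2^(n-1) + d) = 2^(n-1) + 3 * d := by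
  induction d with
  | zero => simpa using start_poor hn (le_refl _)
  | succ d ih =>
      have : childCount n (2^(n-1)+d) = 3 := by
        unfold childCount; rw [if_neg (by omega), if_neg (by omega)]
      rw [show 2^(n-1) + (d+1) = (2^(n-1)+d) + 1 by omega, start_succ, ih, this]
      omega

theorem valid_getElem {w : List ℕ} : ∀ {st : ℕ × ℕ}, Valid st w → ∀ t (ht : t < w.length),
    w[t] < childCount (sIdx st (w.take t)).1 (sIdx st (w.take t)).2 := by
  induction w with
  | nil => intro st _ t ht; simp at ht
  | cons a r ih =>
      intro st hv t ht
      match t with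
      | 0 => simpa [sIdx] using hv.1
      | t + 1 =>
          have := ih hv.2 t (by simpa using ht)
          simpa [sIdx] using this

/-- The index of the vertex reached after `t` steps. -/
def I (w : List ℕ) (t : ℕ) : ℕ := (sIdx (0,0) (w.take t)).2

theorem I_zero (w : List ℕ) : I w 0 = 0 := rfl

theorem take_succ_getElem (w : List ℕ) (t : ℕ) (ht : t < w.length) :
    w.take (t+1) = w.take t ++ [w[t]] := by
  rw [List.take_succ, List.getElem?_eq_getElem ht]; rfl

theorem I_succ (w : List ℕ) (t : ℕ) (ht : t < w.length) :
    I w (t+1) = start t (I w t) + w[t] := by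
  unfold I
  rw [take_succ_getElem w t ht, sIdx_append]
  show (step _ _).2 = _
  simp only [step]
  rw [sIdx_fst]
  simp [List.length_take, Nat.min_eq_left (le_of_lt ht)]

theorem letter_lt {w : List ℕ} (hw : Valid (0,0) w) (t : ℕ) (ht : t < w.length) :
    w[t] < childCount t (I w t) := by
  have := valid_getElem hw t ht
  rwa [sIdx_fst, Nat.zero_add, List.length_take, Nat.min_eq_left (le_of_lt ht)] at this

theorem letter_le2 {w : List ℕ} (hw : Valid (0,0) w) (t : ℕ) (ht : t < w.length) :
    w[t] ≤ 2 := by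
  have h := letter_lt hw t ht
  have := childCount_le t (I w t)
  omega

theorem I_lt {w : List ℕ} (hw : Valid (0,0) w) : ∀ t, t ≤ w.length → I w t < 2^t := by
  intro t
  induction t with
  | zero => intro; simp [I_zero]
  | succ t ih =>
      intro ht
      have ht' : t < w.length := by omega
      have hlt := letter_lt hw t ht'
      have hIt := ih (by omega)
      rw [I_succ w t ht']
      match t with
      | 0 =>
          have h1 : I w 0 = 0 := I_zero w
          rw [h1] at hlt
          have h2 : childCount 0 0 = 2 := by unfold childCount; simp
          have h3 : start 0 0 = 0 := by simp [start]
          rw [h2] at hlt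
          rw [h1, h3]
          omega
      | t + 1 =>
          rcases Nat.lt_or_ge (I w (t+1)) (2^t) with hp | hr
          · have hs : start (t+1) (I w (t+1)) = I w (t+1) := start_poor (by omega) (by simpa using le_of_lt hp)
            have hc : childCount (t+1) (I w (t+1)) = 1 := by
              unfold childCount; rw [if_neg (by omega), if_pos (by simpa using hp)]
            rw [hs]; rw [hc] at hlt
            have : (2:ℕ)^t ≤ 2^(t+1+1) := Nat.pow_le_pow_right (by norm_num) (by omega)
            omega
          · obtain ⟨d, hd⟩ := Nat.exists_eq_add_of_le hr
            have hs : start (t+1) (I w (t+1)) = 2^t + 3 * d := by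
              rw [hd]; simpa using start_rich (n := t+1) (by omega) d
            have hc : childCount (t+1) (I w (t+1)) ≤ 3 := childCount_le _ _
            have h2 : (2:ℕ)^(t+1) = 2 * 2^t := by ring
            have h3 : (2:ℕ)^(t+1+1) = 4 * 2^t := by ring
            rw [hs]
            omega

/-- poor is absorbing with zero letters -/
theorem poor_absorb {w : List ℕ} (hw : Valid (0,0) w) {t : ℕ} (ht1 : 1 ≤ t)
    (hpoor : I w t < 2^(t-1)) :
    ∀ d (hd : t + d < w.length), w[t+d]'hd = 0 ∧ I w (t+d) < 2^(t+d-1) := by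
  intro d
  induction d with
  | zero =>
      intro hlt
      refine ⟨?_, by simpa using hpoor⟩
      have hc : childCount t (I w t) = 1 := by
        unfold childCount; rw [if_neg (by omega), if_pos hpoor]
      have := letter_lt hw t (by simpa using hlt)
      rw [hc] at this
      simpa using Nat.lt_one_iff.mp (by simpa using this)
  | succ d ih =>
      intro hlt
      obtain ⟨hz, hp⟩ := ih (by omega)
      have hI : I w (t+d+1) = I w (t+d) := by
        rw [I_succ w (t+d) (by omega)]
        have hs : start (t+d) (I w (t+d)) = I w (t+d) := start_poor (by omega) (by
          have : (2:ℕ)^(t+d-1) ≤ 2^(t+d-1) := le_refl _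
          omega)
        rw [hz, hs]
        omega
      constructor
      · have hc : childCount (t+d+1) (I w (t+d+1)) = 1 := by
          unfold childCount
          rw [if_neg (by omega), if_pos (by
            rw [hI]
            have : (2:ℕ)^(t+d-1) ≤ 2^(t+d+1-1) := Nat.pow_le_pow_right (by norm_num) (by omega)
            omega)]
        have := letter_lt hw (t+d+1) (by omega)
        rw [hc] at this
        have h0 : w[t+d+1]'(by omega) = 0 := by omega
        simpa [Nat.add_assoc] using h0
      · have : (2:ℕ)^(t+d-1) ≤ 2^(t+(d+1)-1) := Nat.pow_le_pow_right (by norm_num) (by omega)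
        have h2 : I w (t+(d+1)) = I w (t+d) := hI
        omega

def E (w : List ℕ) (t : ℕ) : ℕ := 2^t - 1 - I w t

theorem rich_step {w : List ℕ} (hw : Valid (0,0) w) {t : ℕ} (ht1 : 1 ≤ t) (ht : t < w.length)
    (hrich : 2^(t-1) ≤ I w t) :
    E w (t+1) + w[t] = 3 * E w t + 2 := by
  have hinv : I w t < 2^t := I_lt hw t (le_of_lt ht)
  have hinv2 : I w (t+1) < 2^(t+1) := I_lt hw (t+1) (by omega)
  obtain ⟨d, hd⟩ := Nat.exists_eq_add_of_le hrich
  have hI : I w (t+1) = 2^(t-1) + 3 * d + w[t] := by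
    rw [I_succ w t ht, hd]
    rw [show start t (2^(t-1)+d) = 2^(t-1) + 3*d from start_rich ht1 d]
  have hle : w[t] ≤ 2 := letter_le2 hw t ht
  have h2 : (2:ℕ)^t = 2 * 2^(t-1) := by
    rw [← pow_succ']
    congr 1
    omega
  have h3 : (2:ℕ)^(t+1) = 2 * 2^t := by ring
  unfold E
  omega

/-- THE key quantitative lemma. -/
theorem fkey {w : List ℕ} (hw : Valid (0,0) w) {s u : ℕ} (hs : 1 ≤ s) (hsu : s < u)
    (hu : u < w.length) (hws : w[s] ≤ 1) (h3su : 3 * (s+1) ≤ u) : w[u] = 0 := by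
  by_contra hne
  -- every level in [1, u] is rich
  have hrich : ∀ t, 1 ≤ t → t ≤ u → 2^(t-1) ≤ I w t := by
    intro t ht1 htu
    by_contra hp
    push_neg at hp
    obtain ⟨d, hd⟩ := Nat.exists_eq_add_of_le htu
    have := (poor_absorb hw ht1 hp d (by omega)).1
    exact hne (by simpa [← hd] using this)
  -- E grows
  have hE1 : 1 ≤ E w (s+1) := by
    have := rich_step hw hs (by omega) (hrich s hs (by omega))
    omega
  have hchain : ∀ d, s + 1 + d ≤ u → 3^d ≤ E w (s+1+d) := by
    intro d
    induction d with
    | zero => intro; simpa using hE1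
    | succ d ih =>
        intro hd
        have h1 := ih (by omega)
        have hr := rich_step hw (t := s+1+d) (by omega) (by omega) (hrich _ (by omega) (by omega))
        have hl : w[s+1+d]'(by omega) ≤ 2 := letter_le2 hw _ (by omega)
        have : 3 * E w (s+1+d) ≤ E w (s+1+d+1) := by omega
        have h3 : (3:ℕ)^(d+1) = 3 * 3^d := by ring
        have : (3:ℕ)^(d+1) ≤ 3 * E w (s+1+d) := by
          rw [h3]; exact Nat.mul_le_mul_left 3 h1
        have heq : s+1+(d+1) = s+1+d+1 := by omega
        rw [heq]
        omega
  have hEu : 3^(u - s - 1) ≤ E w u := by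
    have := hchain (u - s - 1) (by omega)
    have heq : s + 1 + (u - s - 1) = u := by omega
    rwa [heq] at this
  -- E u is small since u is rich
  have hEusmall : E w u ≤ 2^(u-1) - 1 := by
    have h1 := hrich u (by omega) (le_refl u)
    have h2 : (2:ℕ)^u = 2 * 2^(u-1) := by
      rw [← pow_succ']; congr 1; omega
    unfold E
    have : 1 ≤ (2:ℕ)^(u-1) := Nat.one_le_two_pow
    omega
  -- but 3^(u-s-1) ≥ 2^u
  have hbig : (2:ℕ)^u ≤ 3^(u - s - 1) := by
    set a := u - s - 1 with ha
    have haa : 2 * (s+1) ≤ a := by omega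
    have e1 : (3:ℕ)^a = 3^(2*(s+1)) * 3^(a - 2*(s+1)) := by
      rw [← pow_add]; congr 1; omega
    have e2 : (3:ℕ)^(2*(s+1)) = 9^(s+1) := by rw [pow_mul]; norm_num
    have e3 : (2:ℕ)^(3*(s+1)) = 8^(s+1) := by rw [pow_mul]; norm_num
    have e4 : (8:ℕ)^(s+1) ≤ 9^(s+1) := Nat.pow_le_pow_left (by norm_num) _
    have e5 : (2:ℕ)^(a - 2*(s+1)) ≤ 3^(a - 2*(s+1)) := Nat.pow_le_pow_left (by norm_num) _
    have e6 : (2:ℕ)^u ≤ 2^(3*(s+1)) * 2^(a - 2*(s+1)) := by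
      rw [← pow_add]
      exact Nat.pow_le_pow_right (by norm_num) (by omega)
    calc (2:ℕ)^u ≤ 2^(3*(s+1)) * 2^(a - 2*(s+1)) := e6
      _ ≤ 9^(s+1) * 3^(a - 2*(s+1)) := Nat.mul_le_mul (by rw [e3]; exact e4) e5
      _ = 3^a := by rw [← e2, ← e1]
  have h1 : 1 ≤ (2:ℕ)^(u-1) := Nat.one_le_two_pow
  have h2 : (2:ℕ)^u = 2 * 2^(u-1) := by rw [← pow_succ']; congr 1; omega
  omega



theorem pref_length (x : ℕ → ℕ) (n : ℕ) : (pref x n).length = n := by simp [pref]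

theorem pref_getElem (x : ℕ → ℕ) {n i : ℕ} (h : i < n) :
    (pref x n)[i]'(by simp [pref]; omega) = x i := by simp [pref]

theorem pref_prefix (x : ℕ → ℕ) {a b : ℕ} (h : a ≤ b) : pref x a <+: pref x b := by
  unfold pref
  rw [show b = a + (b - a) by omega, List.range_add, List.map_append]
  exact ⟨_, rfl⟩

theorem pref_add (x : ℕ → ℕ) (a b : ℕ) :
    pref x (a + b) = pref x a ++ (List.range b).map (fun i => x (a + i)) := by
  unfold pref
  rw [List.range_add, List.map_append, List.map_map]
  rfl

theorem shift_iter (j : ℕ) (y : ℕ → ℕ) (i : ℕ) : (shift^[j] y) i = y (i + j) := by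
  induction j generalizing y i with
  | zero => rfl
  | succ j ih =>
      rw [Function.iterate_succ_apply, ih]; rfl

theorem prefix_drop {A B : List ℕ} (h : A <+: B) (j : ℕ) : A.drop j <+: B.drop j := by
  obtain ⟨t, rfl⟩ := h
  rw [List.drop_append]
  exact ⟨_, rfl⟩

def CompatW (j : ℕ) (w : List ℕ) : Prop := ∃ v ∈ T13, w <+: (expandFrom 0 v).drop j

theorem mem_Ttilde_compat {w : List ℕ} (hw : w ∈ Ttilde) : ∃ j, CompatW j w := by
  obtain ⟨x, hx, n, rfl⟩ := hw
  obtain ⟨S, ⟨j, rfl⟩, y, hy, rfl⟩ := hx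
  refine ⟨j, ?_⟩
  have hdrop : pref (shift^[j] y) n = (pref y (j + n)).drop j := by
    rw [pref_add y j n, List.drop_left' (by rw [pref_length])]
    unfold pref
    apply List.map_congr_left
    intro i _
    rw [shift_iter, Nat.add_comm]
  obtain ⟨v, hv, hpre⟩ := hy (j + n)
  exact ⟨v, hv, hdrop ▸ prefix_drop hpre j⟩

theorem compatW_mono {j : ℕ} {u w : List ℕ} (hu : u <+: w) (h : CompatW j w) : CompatW j u := by
  obtain ⟨v, hv, hpre⟩ := h
  exact ⟨v, hv, hu.trans hpre⟩

theorem compat_getElem {j : ℕ} {w v : List ℕ} (hpre : w <+: (expandFrom 0 v).drop j)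
    {p : ℕ} (hp : p < w.length) :
    ∃ h2 : p + j < (expandFrom 0 v).length, w[p] = (expandFrom 0 v)[p + j] := by
  have hlen : p < ((expandFrom 0 v).drop j).length := lt_of_lt_of_le hp hpre.length_le
  have h2 : p + j < (expandFrom 0 v).length := by
    rw [List.length_drop] at hlen; omega
  refine ⟨h2, ?_⟩
  rw [hpre.getElem hp, List.getElem_drop]
  congr 1
  omega

theorem compat_nonzero {j : ℕ} {w v : List ℕ} (hpre : w <+: (expandFrom 0 v).drop j)
    {p : ℕ} (hp : p < w.length) (hnz : w[p] ≠ 0) :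
    ∃ (c : ℕ) (hc : c < v.length), p + j = tri c ∧ w[p] = v[c]'hc := by
  obtain ⟨h2, heq⟩ := compat_getElem hpre hp
  by_cases htri : ∃ (c : ℕ) (_ : c < v.length), p + j = tri c
  · obtain ⟨c, hc, hce⟩ := htri
    refine ⟨c, hc, hce, ?_⟩
    rw [heq]
    exact expandFrom_getElem_tri v 0 c (p+j) hc (by simpa [tri] using hce) h2
  · exfalso
    apply hnz
    rw [heq]
    apply expandFrom_getElem_zero v 0 (p+j) h2
    intro c hc hne
    exact htri ⟨c, hc, by simpa [tri] using hne⟩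


open Classical in
/-- The letters of the (shifted) rightmost ray. -/
noncomputable def patt (j i : ℕ) : ℕ := if ∃ c, tri c = i + j then 2 else 0

set_option maxHeartbeats 1000000 in
theorem classify {x : ℕ → ℕ} (hx : ∀ n, pref x n ∈ Ttilde) :
    (∃ p, ∀ i, p ≤ i → x i = 0) ∨ (∃ j ℓ, ∀ i, ℓ ≤ i → x i = patt j i) := by
  by_cases h : ∃ p, ∀ i, p ≤ i → x i = 0
  · exact Or.inl h
  push_neg at h
  obtain ⟨p, -, hp⟩ := h 0
  obtain ⟨q, hq1, hq2⟩ := h (p + 1)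
  -- any compatible shift for a long prefix is bounded
  have hbound : ∀ j n, q < n → CompatW j (pref x n) → j ≤ tri (q - p) := by
    intro j n hn ⟨v, hv, hpre⟩
    obtain ⟨c, hc, hce, -⟩ := compat_nonzero hpre (p := p)
      (by rw [pref_length]; omega) (by rw [pref_getElem x (by omega)]; exact hp)
    obtain ⟨d, hd, hde, -⟩ := compat_nonzero hpre (p := q)
      (by rw [pref_length]; omega) (by rw [pref_getElem x (by omega)]; exact hq2)
    have hcd : c < d := by
      have : tri c < tri d := by omega
      exact tri_strictMono.lt_iff_lt.mp this
    have h1 : tri (c+1) = tri c + c + 1 := rfl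
    have h2 : tri (c+1) ≤ tri d := tri_le_tri (by omega)
    have hcq : c ≤ q - p := by omega
    have := tri_le_tri hcq
    omega
  -- pin a single shift value j compatible with all prefixes
  have hpin : ∃ j, ∀ n, CompatW j (pref x n) := by
    by_contra hcon
    push_neg at hcon
    choose ν hν using hcon
    set N := q + 1 + (Finset.range (tri (q - p) + 1)).sup ν with hN
    obtain ⟨j, hj⟩ := mem_Ttilde_compat (hx N)
    have hjb : j ≤ tri (q - p) := hbound j N (by omega) hj
    have hνj : ν j ≤ N := by
      have : ν j ≤ (Finset.range (tri (q - p) + 1)).sup ν :=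
        Finset.le_sup (Finset.mem_range.mpr (by omega))
      omega
    exact hν j (compatW_mono (pref_prefix x hνj) hj)
  obtain ⟨j, hjall⟩ := hpin
  refine Or.inr ⟨j, j + 3, ?_⟩
  intro i hi
  by_cases htri : ∃ c, tri c = i + j
  · -- on a triangular slot the letter must be 2
    rw [patt, if_pos htri]
    obtain ⟨c, hc⟩ := htri
    have hc2 : 2 ≤ c := by
      by_contra hlt
      have : tri c ≤ tri 1 := tri_le_tri (by omega)
      have h1 : tri 1 = 1 := rfl
      omega
    by_contra hxi
    obtain ⟨i', hi'1, hi'2⟩ := h (max (i + 1) (tri (3 * c + 3)))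
    obtain ⟨v, hv, hpre⟩ := hjall (i' + 1)
    have hiv : i < i' + 1 := by
      have := le_max_left (i+1) (tri (3*c+3)); omega
    obtain ⟨d, hd, hde, hdv⟩ := compat_nonzero hpre (p := i')
      (by rw [pref_length]; omega) (by rw [pref_getElem x (by omega)]; exact hi'2)
    have hcd : c < d := by
      apply tri_strictMono.lt_iff_lt.mp
      have := le_max_left (i+1) (tri (3*c+3))
      omega
    -- the letter at slot c is x i
    obtain ⟨h2, heq⟩ := compat_getElem hpre (p := i) (by rw [pref_length]; omega)
    have hxv : x i = v[c]'(by omega) := by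
      have hgi : (pref x (i'+1))[i]'(by rw [pref_length]; omega) = x i := pref_getElem x (by omega)
      rw [← hgi, heq]
      exact expandFrom_getElem_tri v 0 c (i+j) (by omega) (by simpa [tri] using hc.symm) h2
    have hvc2 : v[c]'(by omega) ≤ 2 := letter_le2 (T13_valid hv) c (by omega)
    have hd3 : 3 * (c + 1) ≤ d := by
      have h1 : tri (3*c+3) ≤ tri d := by
        have := le_max_right (i+1) (tri (3*c+3))
        omega
      have := tri_strictMono.le_iff_le.mp h1
      omega
    have := fkey (T13_valid hv) (s := c) (u := d) (by omega) hcd hd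
      (by omega) hd3
    rw [this] at hdv
    rw [pref_getElem x (by omega)] at hdv
    exact hi'2 hdv
  · -- off triangular slots the letter is 0
    rw [patt, if_neg htri]
    by_contra hxi
    obtain ⟨v, hv, hpre⟩ := hjall (i + 1)
    obtain ⟨c, hc, hce, -⟩ := compat_nonzero hpre (p := i)
      (by rw [pref_length]; omega) (by rw [pref_getElem x (by omega)]; exact hxi)
    exact htri ⟨c, hce.symm⟩


theorem exists_depth {lam : ℝ} (hlam : 0 < lam) {δ : ℝ} (hδ : 0 < δ) :
    ∃ n : ℕ, 1 ≤ n ∧ Real.exp (-(n:ℝ)^lam) ≤ δ := by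
  have h1 : Filter.Tendsto (fun n : ℕ => ((n:ℝ))^lam) Filter.atTop Filter.atTop :=
    (tendsto_rpow_atTop hlam).comp tendsto_natCast_atTop_atTop
  have h2 : Filter.Tendsto (fun n : ℕ => Real.exp (-(n:ℝ)^lam)) Filter.atTop (nhds 0) :=
    Real.tendsto_exp_neg_atTop_nhds_zero.comp h1
  obtain ⟨n, hn1, hn2⟩ := ((h2.eventually_lt_const hδ).and (Filter.eventually_ge_atTop 1)).exists
  exact ⟨n, hn2, hn1.le⟩

theorem tsum_subset_range_le {β : Type} (f : List ℕ → ℝ≥0∞) (h : β → List ℕ) (s : Set (List ℕ))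
    (hs : ∀ w ∈ s, ∃ b, h b = w) : ∑' e : s, f e ≤ ∑' b : β, f (h b) := by
  have hg : ∀ e : s, ∃ b, h b = (e : List ℕ) := fun e => hs e e.2
  choose g hg using hg
  have hinj : Function.Injective g := by
    intro e1 e2 he
    apply Subtype.ext
    rw [← hg e1, ← hg e2, he]
  calc ∑' e : s, f e = ∑' e : s, (fun b => f (h b)) (g e) := by
        apply tsum_congr; intro e; simp only [hg e]
    _ ≤ ∑' b, f (h b) := ENNReal.tsum_comp_le_tsum_of_injective hinj _

theorem tsum_encode_le {β : Type} [Encodable β] (c : ℝ≥0∞) :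
    ∑' b : β, c * (2⁻¹:ℝ≥0∞)^(Encodable.encode b) ≤ c * 2 := by
  rw [ENNReal.tsum_mul_left]
  refine mul_le_mul_right ?_ c
  calc ∑' b : β, (2⁻¹:ℝ≥0∞)^(Encodable.encode b) ≤ ∑' k : ℕ, (2⁻¹:ℝ≥0∞)^k :=
        ENNReal.tsum_comp_le_tsum_of_injective Encodable.encode_injective _
    _ = (1 - 2⁻¹)⁻¹ := ENNReal.tsum_geometric _
    _ = 2 := by rw [ENNReal.one_sub_inv_two]; simp

theorem ofReal_half_pow (k : ℕ) : ENNReal.ofReal ((1/2:ℝ)^k) = (2⁻¹:ℝ≥0∞)^k := by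
  rw [ENNReal.ofReal_pow (by norm_num)]
  congr 1
  rw [one_div, ENNReal.ofReal_inv_of_pos (by norm_num)]
  norm_num

theorem ray_length {r : ℕ → List ℕ} (h0 : r 0 = []) (hstep : ∀ n, ∃ a, r (n+1) = r n ++ [a]) :
    ∀ n, (r n).length = n := by
  intro n
  induction n with
  | zero => rw [h0]; rfl
  | succ n ih => obtain ⟨a, ha⟩ := hstep n; rw [ha]; simp [ih]

theorem pref_succ (x : ℕ → ℕ) (n : ℕ) : pref x (n+1) = pref x n ++ [x n] := by
  unfold TreeNotions.pref
  rw [List.range_succ, List.map_append]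
  rfl

theorem ray_pref {r : ℕ → List ℕ} (h0 : r 0 = []) (hstep : ∀ n, ∃ a, r (n+1) = r n ++ [a]) :
    ∀ n, r n = pref (fun i => (r (i+1)).getD i 0) n := by
  set x : ℕ → ℕ := fun i => (r (i+1)).getD i 0 with hx
  intro n
  induction n with
  | zero => rw [h0]; rfl
  | succ n ih =>
      obtain ⟨a, ha⟩ := hstep n
      have hlen : (r n).length = n := ray_length h0 hstep n
      have hxa : x n = a := by
        rw [hx]
        simp only
        rw [ha, List.getD_eq_getElem _ _ (by simp [hlen]), List.getElem_append_right (by omega)]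
        simp [hlen]
      rw [ha, ih, pref_succ, hxa]

end IbrAux

open TreeNotions Filter ENNReal in
/-- The intermediate branching number of `T̃` is `0`: for every `λ > 0` and `ε > 0`,
there is a cutset `π` of `T̃` with `∑_{e ∈ π} exp(-|e|^λ) ≤ ε`. -/
theorem Ibr_Ttilde :
    Ibr Ttilde = 0 ∧
    ∀ lam : ℝ, 0 < lam → ∀ ε : ℝ, 0 < ε → ∃ π : Set (List ℕ), IsCutset Ttilde π ∧
      (∑' e : π, ENNReal.ofReal (Real.exp (-((e : List ℕ).length : ℝ) ^ lam)))
        ≤ ENNReal.ofReal ε := by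
  classical
  have main : ∀ lam : ℝ, 0 < lam → ∀ ε : ℝ, 0 < ε → ∃ π : Set (List ℕ), IsCutset Ttilde π ∧
      (∑' e : π, ENNReal.ofReal (Real.exp (-((e : List ℕ).length : ℝ) ^ lam)))
        ≤ ENNReal.ofReal ε := by
    intro lam hlam ε hε
    set ε' : ℝ := ε / 8 with hε'def
    have hε' : 0 < ε' := by positivity
    have hch : ∀ k : ℕ, ∃ n : ℕ, 1 ≤ n ∧ Real.exp (-(n:ℝ)^lam) ≤ ε' * (1/2)^k := by
      intro k
      exact IbrAux.exists_depth hlam (by positivity)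
    choose N hN1 hN2 using hch
    set F : List ℕ → ℝ≥0∞ := fun w => ENNReal.ofReal (Real.exp (-(w.length:ℝ)^lam)) with hF
    -- the two families of deep cut vertices
    set hA : List ℕ → List ℕ := fun u => u ++ List.replicate (N (Encodable.encode u)) 0 with hhA
    set hB : List ℕ × ℕ → List ℕ := fun uj =>
      uj.1 ++ (List.range (N (Encodable.encode uj))).map
        (fun t => IbrAux.patt uj.2 (uj.1.length + t)) with hhB
    set A : Set (List ℕ) := {w | w ∈ Ttilde ∧ ∃ u, hA u = w} with hAdef
    set B : Set (List ℕ) := {w | w ∈ Ttilde ∧ ∃ uj, hB uj = w} with hBdef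
    have hlenA : ∀ u, (hA u).length = u.length + N (Encodable.encode u) := by
      intro u; simp [hhA]
    have hlenB : ∀ uj, (hB uj).length = uj.1.length + N (Encodable.encode uj) := by
      intro uj; simp [hhB]
    refine ⟨A ∪ B, ⟨?_, ?_⟩, ?_⟩
    · -- elements are proper vertices
      rintro v (⟨hv, u, hu⟩ | ⟨hv, uj, hu⟩)
      · refine ⟨hv, ?_⟩
        have := hN1 (Encodable.encode u)
        have hl : 0 < v.length := by rw [← hu, hlenA]; omega
        exact List.ne_nil_of_length_pos hl
      · refine ⟨hv, ?_⟩
        have := hN1 (Encodable.encode uj)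
        have hl : 0 < v.length := by rw [← hu, hlenB]; omega
        exact List.ne_nil_of_length_pos hl
    · -- every ray is cut
      rintro r ⟨h0, hstep⟩
      have hstep' : ∀ n, ∃ a, r (n+1) = r n ++ [a] := fun n => (hstep n).2
      set x : ℕ → ℕ := fun i => (r (i+1)).getD i 0 with hx
      have hpref : ∀ n, r n = pref x n := IbrAux.ray_pref h0 hstep'
      have hmem : ∀ n, pref x n ∈ Ttilde := fun n => (hpref n) ▸ (hstep n).1
      rcases IbrAux.classify hmem with ⟨p, hz⟩ | ⟨j, ℓ, hpatt⟩
      · -- eventually zero: use family A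
        refine ⟨p + N (Encodable.encode (pref x p)), Or.inl ⟨(hstep _).1, pref x p, ?_⟩⟩
        rw [hpref, IbrAux.pref_add]
        show pref x p ++ _ = pref x p ++ _
        congr 1
        symm
        rw [List.eq_replicate_iff]
        refine ⟨by simp, ?_⟩
        intro b hb
        simp only [List.mem_map, List.mem_range] at hb
        obtain ⟨i, -, rfl⟩ := hb
        exact hz _ (by omega)
      · -- eventually the rightmost pattern: use family B
        refine ⟨ℓ + N (Encodable.encode (pref x ℓ, j)), Or.inr ⟨(hstep _).1, (pref x ℓ, j), ?_⟩⟩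
        rw [hpref, IbrAux.pref_add]
        show pref x ℓ ++ _ = pref x ℓ ++ _
        congr 1
        apply List.map_congr_left
        intro t ht
        rw [IbrAux.pref_length]
        exact (hpatt (ℓ + t) (by omega)).symm
    · -- the weight is small
      have hkey : ∀ (m k : ℕ), ENNReal.ofReal (Real.exp (-(((m + N k : ℕ)):ℝ)^lam))
          ≤ ENNReal.ofReal ε' * (2⁻¹:ℝ≥0∞)^k := by
        intro m k
        have h1 : ((N k : ℕ):ℝ) ≤ ((m + N k : ℕ):ℝ) := by
          exact_mod_cast Nat.le_add_left _ _
        have h2 : ((N k : ℕ):ℝ)^lam ≤ ((m + N k : ℕ):ℝ)^lam :=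
          Real.rpow_le_rpow (by positivity) h1 hlam.le
        have h3 : Real.exp (-(((m + N k : ℕ)):ℝ)^lam) ≤ ε' * (1/2)^k :=
          le_trans (Real.exp_le_exp.mpr (by linarith)) (hN2 k)
        calc ENNReal.ofReal (Real.exp (-(((m + N k : ℕ)):ℝ)^lam))
            ≤ ENNReal.ofReal (ε' * (1/2)^k) := ENNReal.ofReal_le_ofReal h3
          _ = ENNReal.ofReal ε' * (2⁻¹:ℝ≥0∞)^k := by
              rw [ENNReal.ofReal_mul hε'.le, IbrAux.ofReal_half_pow]
      have hsumA : (∑' e : A, F e) ≤ ENNReal.ofReal ε' * 2 := by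
        refine le_trans (IbrAux.tsum_subset_range_le F hA A (fun w hw => hw.2)) ?_
        refine le_trans (ENNReal.tsum_le_tsum (fun u => ?_)) (IbrAux.tsum_encode_le _)
        show F (hA u) ≤ _
        rw [hF]
        simp only
        rw [hlenA u]
        exact_mod_cast hkey u.length (Encodable.encode u)
      have hsumB : (∑' e : B, F e) ≤ ENNReal.ofReal ε' * 2 := by
        refine le_trans (IbrAux.tsum_subset_range_le F hB B (fun w hw => hw.2)) ?_
        refine le_trans (ENNReal.tsum_le_tsum (fun uj => ?_)) (IbrAux.tsum_encode_le _)
        show F (hB uj) ≤ _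
        rw [hF]
        simp only
        rw [hlenB uj]
        exact_mod_cast hkey uj.1.length (Encodable.encode uj)
      calc (∑' e : ↥(A ∪ B), ENNReal.ofReal (Real.exp (-((e : List ℕ).length : ℝ) ^ lam)))
          = ∑' e : ↥(A ∪ B), F e := by rfl
        _ ≤ (∑' e : A, F e) + ∑' e : B, F e := ENNReal.tsum_union_le F A B
        _ ≤ ENNReal.ofReal ε' * 2 + ENNReal.ofReal ε' * 2 := add_le_add hsumA hsumB
        _ = ENNReal.ofReal ε' * 4 := by ring
        _ = ENNReal.ofReal (ε' * 4) := by
            rw [ENNReal.ofReal_mul hε'.le]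
            norm_num
        _ ≤ ENNReal.ofReal ε := ENNReal.ofReal_le_ofReal (by rw [hε'def]; linarith)
  refine ⟨?_, main⟩
  have hempty : {lam : ℝ | 0 < lam ∧
      0 < ⨅ (π) (_ : IsCutset Ttilde π),
        ∑' e : π, ENNReal.ofReal (Real.exp (-((e : List ℕ).length : ℝ) ^ lam))} = ∅ := by
    rw [Set.eq_empty_iff_forall_notMem]
    rintro lam ⟨hpos, hinf⟩
    have h0 : (⨅ (π) (_ : IsCutset Ttilde π),
        ∑' e : π, ENNReal.ofReal (Real.exp (-((e : List ℕ).length : ℝ) ^ lam))) = 0 := by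
      refine le_antisymm ?_ zero_le
      refine ENNReal.le_of_forall_pos_le_add ?_
      intro δ hδ _
      obtain ⟨π, hπ, hsum⟩ := main lam hpos δ (by exact_mod_cast hδ)
      refine le_trans (le_trans (iInf₂_le π hπ) hsum) ?_
      rw [ENNReal.ofReal_coe_nnreal, zero_add]
    rw [h0] at hinf
    exact lt_irrefl 0 hinf
  show sSup _ = 0
  rw [hempty, Real.sSup_empty]
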